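/- arXiv:1707.04804 — 5 statements merged into one kernel-verified Lean document; each statement's English description precedes it below -/
import Mathlib

section
/- For any real b with e^{πb} > 15, one has ∑_{k=3}^∞ σ₁(k) e^{-2kπb} < e^{-4πb}. -/
open Real

lemma sigma_le_sq (n : ℕ) : (∑ d ∈ n.divisors, d) ≤ n ^ 2 := by
  calc (∑ d ∈ n.divisors, d) ≤ ∑ _d ∈ n.divisors, n := by
        refine Finset.sum_le_sum fun d hd => Nat.divisor_le hd
    _ = n.divisors.card * n := by rw [Finset.sum_const, smul_eq_mul]
    _ ≤ n * n := by
        refine Nat.mul_le_mul_right _ ?_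
        calc n.divisors.card ≤ (Finset.Icc 1 n).card := by
              refine Finset.card_le_card fun d hd => ?_
              rw [Finset.mem_Icc]
              exact ⟨Nat.pos_of_mem_divisors hd, Nat.divisor_le hd⟩
          _ = n := by simp
    _ = n ^ 2 := (sq n).symm

lemma sq_le_pow (k : ℕ) : ((k : ℝ) + 3) ^ 2 ≤ 9 * 2 ^ k := by
  induction k with
  | zero => norm_num
  | succ n ih =>
    push_cast
    have hn : (0:ℝ) ≤ (n:ℝ) := Nat.cast_nonneg n
    have : (2:ℝ) ^ (n+1) = 2 * 2 ^ n := by ring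
    nlinarith [ih, pow_pos (by norm_num : (0:ℝ) < 2) n]

/-- For any real `b` with `e^{πb} > 15`, one has `∑_{k=3}^∞ σ₁(k) e^{-2kπb} < e^{-4πb}`. -/
theorem stmt_3 (b : ℝ) (hb : Real.exp (π * b) > 15) :
    ∑' k : ℕ, ((∑ d ∈ (k + 3).divisors, d : ℕ) : ℝ) * Real.exp (-2 * (k + 3) * π * b)
      < Real.exp (-4 * π * b) := by
  set q : ℝ := Real.exp (-(2 * (π * b))) with hqdef
  have hq0 : 0 < q := Real.exp_pos _
  have hq : q < 1 / 225 := by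
    have h2 : Real.exp (2 * (π * b)) = Real.exp (π * b) * Real.exp (π * b) := by
      rw [← Real.exp_add]; ring_nf
    have h225 : (225:ℝ) < Real.exp (2 * (π * b)) := by
      rw [h2]; nlinarith
    rw [hqdef, Real.exp_neg]
    rw [inv_lt_comm₀ (by positivity) (by norm_num)]
    · linarith [h225]
  have hexp : ∀ k : ℕ, Real.exp (-2 * ((k:ℝ) + 3) * π * b) = q ^ (k + 3) := by
    intro k
    rw [hqdef, ← Real.exp_nat_mul]
    congr 1
    push_cast
    ring
  -- bound each term
  have hle : ∀ k : ℕ,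
      ((∑ d ∈ (k + 3).divisors, d : ℕ) : ℝ) * Real.exp (-2 * ((k:ℝ) + 3) * π * b)
        ≤ 9 * q ^ 3 * (2 * q) ^ k := by
    intro k
    rw [hexp k]
    have h1 : ((∑ d ∈ (k + 3).divisors, d : ℕ) : ℝ) ≤ ((k:ℝ) + 3) ^ 2 := by
      have := sigma_le_sq (k + 3)
      calc ((∑ d ∈ (k + 3).divisors, d : ℕ) : ℝ) ≤ ((k + 3 : ℕ) : ℝ) ^ 2 := by
            exact_mod_cast this
        _ = ((k:ℝ) + 3) ^ 2 := by push_cast; ring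
    have h2 : ((k:ℝ) + 3) ^ 2 ≤ 9 * 2 ^ k := sq_le_pow k
    have hqk : (0:ℝ) < q ^ (k + 3) := pow_pos hq0 _
    calc ((∑ d ∈ (k + 3).divisors, d : ℕ) : ℝ) * q ^ (k + 3)
        ≤ (9 * 2 ^ k) * q ^ (k + 3) := by
          exact mul_le_mul_of_nonneg_right (h1.trans h2) hqk.le
      _ = 9 * q ^ 3 * (2 * q) ^ k := by
          rw [mul_pow, pow_add]; ring
  have h2q : |2 * q| < 1 := by
    rw [abs_of_pos (by positivity)]; linarith
  have hgsum : Summable (fun k : ℕ => 9 * q ^ 3 * (2 * q) ^ k) :=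
    (summable_geometric_of_lt_one (by positivity) (by linarith)).mul_left _
  have hfnn : ∀ k : ℕ, 0 ≤ ((∑ d ∈ (k + 3).divisors, d : ℕ) : ℝ)
      * Real.exp (-2 * ((k:ℝ) + 3) * π * b) := by
    intro k; positivity
  have hfsum : Summable (fun k : ℕ =>
      ((∑ d ∈ (k + 3).divisors, d : ℕ) : ℝ) * Real.exp (-2 * ((k:ℝ) + 3) * π * b)) :=
    Summable.of_nonneg_of_le hfnn hle hgsum
  have htsum_le := Summable.tsum_le_tsum hle hfsum hgsum
  have hgval : ∑' k : ℕ, 9 * q ^ 3 * (2 * q) ^ k = 9 * q ^ 3 * (1 - 2 * q)⁻¹ := by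
    rw [tsum_mul_left, tsum_geometric_of_lt_one (by positivity) (by linarith)]
  have hfinal : 9 * q ^ 3 * (1 - 2 * q)⁻¹ < q ^ 2 := by
    rw [mul_inv_lt_iff₀ (by linarith)]
    nlinarith [pow_pos hq0 2, pow_pos hq0 3]
  have hq2 : Real.exp (-4 * π * b) = q ^ 2 := by
    rw [hqdef, ← Real.exp_nat_mul]
    congr 1; push_cast; ring
  rw [hq2]
  calc (∑' k : ℕ, ((∑ d ∈ (k + 3).divisors, d : ℕ) : ℝ) * Real.exp (-2 * ((k:ℝ) + 3) * π * b))
      ≤ ∑' k : ℕ, 9 * q ^ 3 * (2 * q) ^ k := htsum_le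
    _ = 9 * q ^ 3 * (1 - 2 * q)⁻¹ := hgval
    _ < q ^ 2 := hfinal
end

section
/- For any real b with e^{πb} > 40, one has ∑_{k=2}^∞ σ₃(k) e^{-2kπb} < (1/2) e^{-2πb}. -/
open Real

lemma aux_pow_le (k : ℕ) : (k + 2) ^ 4 ≤ 6 ^ (k + 2) := by
  induction k with
  | zero => norm_num
  | succ n ih =>
    have h : (n + 3) ^ 4 ≤ 6 * (n + 2) ^ 4 := by
      have hn : (0:ℤ) ≤ (n:ℤ) := Int.natCast_nonneg n
      zify
      nlinarith [hn, mul_nonneg hn hn, mul_nonneg (mul_nonneg hn hn) hn,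
        mul_nonneg (mul_nonneg (mul_nonneg hn hn) hn) hn]
    calc (n + 1 + 2) ^ 4 = (n + 3) ^ 4 := by ring_nf
      _ ≤ 6 * (n + 2) ^ 4 := h
      _ ≤ 6 * 6 ^ (n + 2) := by omega
      _ = 6 ^ (n + 1 + 2) := by ring

lemma aux_sigma_le (n : ℕ) : ∑ d ∈ n.divisors, d ^ 3 ≤ n ^ 4 := by
  have hcard : n.divisors.card ≤ n := by
    have h1 : n.divisors.card ≤ (Finset.Ico 1 (n + 1)).card := by
      rw [Nat.divisors]; exact Finset.card_filter_le _ _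
    simpa using h1
  calc ∑ d ∈ n.divisors, d ^ 3 ≤ ∑ _d ∈ n.divisors, n ^ 3 := by
        apply Finset.sum_le_sum
        intro d hd
        exact Nat.pow_le_pow_left (Nat.divisor_le hd) 3
    _ = n.divisors.card * n ^ 3 := by rw [Finset.sum_const, smul_eq_mul]
    _ ≤ n * n ^ 3 := Nat.mul_le_mul_right _ hcard
    _ = n ^ 4 := by ring

/-- For any real `b` with `e^{πb} > 40`, one has `∑_{k=2}^∞ σ₃(k) e^{-2kπb} < (1/2) e^{-2πb}`. -/
theorem stmt_4 (b : ℝ) (hb : Real.exp (π * b) > 40) :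
    ∑' k : ℕ, ((∑ d ∈ (k + 2).divisors, d ^ 3 : ℕ) : ℝ) * Real.exp (-2 * (k + 2) * π * b)
      < (1 / 2) * Real.exp (-2 * π * b) := by
  set r : ℝ := Real.exp (-2 * π * b) with hrdef
  have hr0 : 0 < r := Real.exp_pos _
  have hprod : r * Real.exp (π * b) * Real.exp (π * b) = 1 := by
    rw [hrdef, ← Real.exp_add, ← Real.exp_add]
    ring_nf
    exact Real.exp_zero
  have hr' : r < 1 / 1600 := by
    have h1 : (1600:ℝ) < Real.exp (π * b) * Real.exp (π * b) := by nlinarith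
    have h2 : r * 1600 < r * (Real.exp (π * b) * Real.exp (π * b)) :=
      (mul_lt_mul_iff_right₀ hr0).2 h1
    rw [← mul_assoc, hprod] at h2
    linarith
  set x : ℝ := 6 * r with hxdef
  have hx0 : 0 < x := by positivity
  have hx1 : x < 1 := by rw [hxdef]; nlinarith
  have hexp : ∀ k : ℕ, Real.exp (-2 * ((k : ℝ) + 2) * π * b) = r ^ (k + 2) := by
    intro k
    rw [hrdef, ← Real.exp_nat_mul]
    congr 1
    push_cast
    ring
  have hterm : ∀ k : ℕ,
      ((∑ d ∈ (k + 2).divisors, d ^ 3 : ℕ) : ℝ) * Real.exp (-2 * ((k : ℝ) + 2) * π * b)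
        ≤ x ^ 2 * x ^ k := by
    intro k
    rw [hexp k]
    have h1 : ((∑ d ∈ (k + 2).divisors, d ^ 3 : ℕ) : ℝ) ≤ (6 : ℝ) ^ (k + 2) := by
      have := (aux_sigma_le (k + 2)).trans (aux_pow_le k)
      exact_mod_cast this
    calc ((∑ d ∈ (k + 2).divisors, d ^ 3 : ℕ) : ℝ) * r ^ (k + 2)
        ≤ (6 : ℝ) ^ (k + 2) * r ^ (k + 2) := by
          apply mul_le_mul_of_nonneg_right h1 (by positivity)
      _ = x ^ (k + 2) := by rw [hxdef, mul_pow]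
      _ = x ^ 2 * x ^ k := by ring
  have hnn : ∀ k : ℕ,
      0 ≤ ((∑ d ∈ (k + 2).divisors, d ^ 3 : ℕ) : ℝ) * Real.exp (-2 * ((k : ℝ) + 2) * π * b) := by
    intro k; positivity
  have hgs : Summable (fun k : ℕ => x ^ 2 * x ^ k) :=
    (summable_geometric_of_lt_one hx0.le hx1).mul_left _
  have hsum : Summable (fun k : ℕ =>
      ((∑ d ∈ (k + 2).divisors, d ^ 3 : ℕ) : ℝ) * Real.exp (-2 * ((k : ℝ) + 2) * π * b)) :=
    Summable.of_nonneg_of_le hnn hterm hgs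
  have hle : ∑' k : ℕ, ((∑ d ∈ (k + 2).divisors, d ^ 3 : ℕ) : ℝ) *
      Real.exp (-2 * ((k : ℝ) + 2) * π * b) ≤ x ^ 2 * (1 - x)⁻¹ := by
    calc _ ≤ ∑' k : ℕ, x ^ 2 * x ^ k := Summable.tsum_le_tsum hterm hsum hgs
      _ = x ^ 2 * (1 - x)⁻¹ := by
          rw [tsum_mul_left, tsum_geometric_of_lt_one hx0.le hx1]
  refine lt_of_le_of_lt hle ?_
  have h1x : 0 < 1 - x := by linarith
  rw [← div_eq_mul_inv, div_lt_iff₀ h1x]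
  rw [hxdef]
  nlinarith
end

section
/- Let b ≥ √3/2 be real and set a_k = -(-1)^k σ₁(k) e^{-2kπb} for k ≥ 1. Then 0 < ∑_{k=1}^∞ a_k < e^{-2πb}. -/
open Real

lemma stmt5_sigma_le (n : ℕ) : (∑ d ∈ n.divisors, d) ≤ n * n := by
  calc (∑ d ∈ n.divisors, d) ≤ ∑ _d ∈ n.divisors, n :=
        Finset.sum_le_sum fun d hd => Nat.divisor_le hd
    _ = n.divisors.card * n := by rw [Finset.sum_const, smul_eq_mul]
    _ ≤ n * n := by
        gcongr
        calc n.divisors.card ≤ (Finset.Ico 1 (n+1)).card := Finset.card_filter_le _ _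
          _ = n := by simp

lemma stmt5_sq_le_pow2 (k : ℕ) : (((k:ℝ)+3)^2 : ℝ) ≤ 9 * 2^k := by
  induction k with
  | zero => norm_num
  | succ n ih =>
      have h2 : (0:ℝ) ≤ 2^n := by positivity
      push_cast
      push_cast at ih
      calc ((n:ℝ)+1+3)^2 ≤ 2 * ((n:ℝ)+3)^2 := by nlinarith [Nat.cast_nonneg (α := ℝ) n]
        _ ≤ 2 * (9 * 2^n) := by nlinarith
        _ = 9 * 2^(n+1) := by ring

/-- For `b ≥ √3/2`, with `a_k = -(-1)^k σ₁(k) e^{-2kπb}`, one has `0 < ∑_{k=1}^∞ a_k < e^{-2πb}`. -/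
theorem stmt_5 (b : ℝ) (hb : Real.sqrt 3 / 2 ≤ b)
    (a : ℕ → ℝ)
    (ha : ∀ k, a k = -((-1 : ℝ) ^ k * ((∑ d ∈ k.divisors, d : ℕ) : ℝ) * Real.exp (-2 * k * π * b))) :
    0 < ∑' k : ℕ, a (k + 1) ∧ ∑' k : ℕ, a (k + 1) < Real.exp (-2 * π * b) := by
  set x := Real.exp (-2 * π * b) with hx
  have hx0 : 0 < x := Real.exp_pos _
  -- numeric bound x ≤ 1/100
  have hsqrt3 : (1.7:ℝ) ≤ Real.sqrt 3 := by
    rw [show (1.7:ℝ) = Real.sqrt (1.7^2) by rw [Real.sqrt_sq]; norm_num]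
    exact Real.sqrt_le_sqrt (by norm_num)
  have hpi : (3.14:ℝ) ≤ π := by linarith [Real.pi_gt_d6]
  have hb5 : (5:ℝ) ≤ 2 * π * b := by nlinarith
  have hexp5 : (100:ℝ) < Real.exp 5 := by
    have h5 : Real.exp 5 = Real.exp 1 ^ 5 := by
      rw [show (5:ℝ) = ((5:ℕ):ℝ) * 1 by norm_num, Real.exp_nat_mul]
    have he : (2.7:ℝ) < Real.exp 1 := by linarith [Real.exp_one_gt_d9]
    have hp : (2.7:ℝ)^5 < Real.exp 1 ^ 5 := by
      apply pow_lt_pow_left₀ he (by norm_num)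
      norm_num
    rw [h5]
    nlinarith [hp]
  have hx100 : x ≤ 1/100 := by
    have : x ≤ Real.exp (-5) := by
      rw [hx]
      apply Real.exp_le_exp.2
      linarith
    have h5 : Real.exp (-5) < 1/100 := by
      rw [Real.exp_neg]
      rw [inv_lt_comm₀ (Real.exp_pos 5) (by norm_num)]
      simpa using hexp5
    linarith
  -- rewrite a (k+1)
  have ha' : ∀ k : ℕ, a (k+1) =
      (-1:ℝ)^k * ((∑ d ∈ (k+1).divisors, d : ℕ) : ℝ) * x^(k+1) := by
    intro k
    rw [ha]
    have he : Real.exp (-2 * ((k:ℝ)+1) * π * b) = x^(k+1) := by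
      rw [hx, ← Real.exp_nat_mul]
      congr 1
      push_cast
      ring
    push_cast
    rw [he, pow_succ]
    ring
  -- abs values
  have habsa : ∀ k : ℕ, |a (k+1)| = ((∑ d ∈ (k+1).divisors, d : ℕ) : ℝ) * x^(k+1) := by
    intro k
    rw [ha', abs_mul, abs_mul, abs_pow, abs_neg, abs_one, one_pow, one_mul,
      abs_of_nonneg (by positivity : (0:ℝ) ≤ ((∑ d ∈ (k+1).divisors, d : ℕ) : ℝ)),
      abs_of_nonneg (by positivity : (0:ℝ) ≤ x^(k+1))]
  have hsig : ∀ n : ℕ, ((∑ d ∈ n.divisors, d : ℕ) : ℝ) ≤ (n:ℝ)^2 := by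
    intro n
    have := stmt5_sigma_le n
    calc ((∑ d ∈ n.divisors, d : ℕ) : ℝ) ≤ ((n*n : ℕ) : ℝ) := by exact_mod_cast this
      _ = (n:ℝ)^2 := by push_cast; ring
  -- summability
  have h2x : 2 * x < 1 := by linarith
  have h2x0 : (0:ℝ) ≤ 2 * x := by positivity
  have hgeo : Summable (fun k : ℕ => 9 * x * (2*x)^k) :=
    (summable_geometric_of_lt_one h2x0 h2x).mul_left _
  have hbound : ∀ k : ℕ, |a (k+1)| ≤ 9 * x * (2*x)^k := by
    intro k
    rw [habsa]
    have h1 : ((∑ d ∈ (k+1).divisors, d : ℕ) : ℝ) ≤ 9 * 2^k := by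
      refine (hsig (k+1)).trans ?_
      refine le_trans ?_ (stmt5_sq_le_pow2 k)
      push_cast
      nlinarith [Nat.cast_nonneg (α := ℝ) k]
    calc ((∑ d ∈ (k+1).divisors, d : ℕ) : ℝ) * x^(k+1)
        ≤ (9 * 2^k) * x^(k+1) := by
          apply mul_le_mul_of_nonneg_right h1 (by positivity)
      _ = 9 * x * (2*x)^k := by rw [mul_pow, pow_succ]; ring
  have hsum : Summable (fun k : ℕ => a (k+1)) := by
    apply Summable.of_abs
    exact Summable.of_nonneg_of_le (fun k => abs_nonneg _) hbound hgeo
  -- peel off two terms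
  have hsum2 : Summable (fun k : ℕ => a (k+2)) := by
    have := (summable_nat_add_iff (f := fun k => a (k+1)) 1).2 hsum
    simpa [add_assoc] using this
  have hsum3 : Summable (fun k : ℕ => a (k+3)) := by
    have := (summable_nat_add_iff (f := fun k => a (k+2)) 1).2 hsum2
    simpa [add_assoc] using this
  have hdecomp : ∑' k : ℕ, a (k+1) = a 1 + (a 2 + ∑' k : ℕ, a (k+3)) := by
    rw [Summable.tsum_eq_zero_add hsum]
    congr 1
    have h1 : (fun k : ℕ => a (k+1+1)) = fun k : ℕ => a (k+2) := by
      funext k; norm_num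
    rw [h1, Summable.tsum_eq_zero_add hsum2]
  -- values of a 1, a 2
  have ha1 : a 1 = x := by
    have h := ha' 0
    rw [show (∑ d ∈ (0+1:ℕ).divisors, d) = 1 by decide] at h
    norm_num at h
    linear_combination h
  have ha2 : a 2 = -3 * x^2 := by
    have h := ha' 1
    rw [show (∑ d ∈ (1+1:ℕ).divisors, d) = 3 by decide] at h
    norm_num at h
    linear_combination h
  -- bound the tail T
  set T := ∑' k : ℕ, a (k+3) with hT
  have hbound3 : ∀ k : ℕ, |a (k+3)| ≤ 9 * x^3 * (2*x)^k := by
    intro k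
    have h := habsa (k+2)
    have e1 : k + 2 + 1 = k + 3 := by ring
    rw [e1] at h
    rw [h]
    have h1 : ((∑ d ∈ (k+3).divisors, d : ℕ) : ℝ) ≤ 9 * 2^k := by
      refine (hsig (k+3)).trans ?_
      have := stmt5_sq_le_pow2 k
      push_cast
      linarith
    calc ((∑ d ∈ (k+3).divisors, d : ℕ) : ℝ) * x^(k+3)
        ≤ (9 * 2^k) * x^(k+3) := by
          apply mul_le_mul_of_nonneg_right h1 (by positivity)
      _ = 9 * x^3 * (2*x)^k := by rw [mul_pow, pow_add]; ring
  have hgeo3 : Summable (fun k : ℕ => 9 * x^3 * (2*x)^k) :=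
    (summable_geometric_of_lt_one h2x0 h2x).mul_left _
  have hsumabs3 : Summable (fun k : ℕ => |a (k+3)|) :=
    Summable.of_nonneg_of_le (fun k => abs_nonneg _) hbound3 hgeo3
  have htsum_maj : ∑' k : ℕ, 9 * x^3 * (2*x)^k = 9 * x^3 * (1 - 2*x)⁻¹ := by
    rw [tsum_mul_left, tsum_geometric_of_lt_one h2x0 h2x]
  have hinv : (1 - 2*x)⁻¹ ≤ 2 := by
    rw [inv_le_comm₀ (by linarith) (by norm_num)]
    linarith
  have hTabs : |T| ≤ 18 * x^3 := by
    have h1 : |T| ≤ ∑' k : ℕ, |a (k+3)| := by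
      have := norm_tsum_le_tsum_norm (f := fun k : ℕ => a (k+3)) (by simpa [Real.norm_eq_abs] using hsumabs3)
      simpa [Real.norm_eq_abs] using this
    have h2 : ∑' k : ℕ, |a (k+3)| ≤ ∑' k : ℕ, 9 * x^3 * (2*x)^k :=
      Summable.tsum_le_tsum hbound3 hsumabs3 hgeo3
    have h3 : (9:ℝ) * x^3 * (1 - 2*x)⁻¹ ≤ 18 * x^3 := by
      nlinarith [mul_nonneg (pow_nonneg hx0.le 3) (sub_nonneg.2 hinv)]
    linarith [h2.trans_eq htsum_maj]
  have hT1 := (abs_le.1 hTabs).1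
  have hT2 := (abs_le.1 hTabs).2
  rw [hdecomp, ha1, ha2]
  constructor
  · nlinarith
  · nlinarith
end

section
/- For b ≥ √3/2, the quantity η₁(1/2 + ib) defined by the q-series η₁(τ) = π²/3 - 8π² ∑_{k=1}^∞ σ₁(k) e^{2kπiτ} satisfies π²/3 < η₁(1/2 + ib) < π²/3 + 8π² e^{-2πb}. -/
noncomputable section
open Real

lemma sigma1_le' (m : ℕ) : (∑ d ∈ m.divisors, d) ≤ m * m := by
  calc ∑ d ∈ m.divisors, d ≤ ∑ _d ∈ m.divisors, m :=
        Finset.sum_le_sum fun d hd => Nat.divisor_le hd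
    _ = m.divisors.card * m := by rw [Finset.sum_const, smul_eq_mul]
    _ ≤ m * m := by
        refine Nat.mul_le_mul_right m ?_
        calc m.divisors.card ≤ (Finset.Ico 1 (m + 1)).card := by
              apply Finset.card_le_card
              intro d hd
              simp [Nat.divisors] at hd ⊢
              omega
          _ = m := by simp

lemma pow_aux' (n : ℕ) : ((n + 3) * (n + 3) : ℕ) ≤ 12 * 2 ^ n := by
  induction n with
  | zero => norm_num
  | succ k ih =>
    have h : (k + 4) * (k + 4) ≤ 2 * ((k + 3) * (k + 3)) := by nlinarith
    calc (k + 1 + 3) * (k + 1 + 3) = (k + 4) * (k + 4) := by ring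
      _ ≤ 2 * ((k + 3) * (k + 3)) := h
      _ ≤ 2 * (12 * 2 ^ k) := by omega
      _ = 12 * 2 ^ (k + 1) := by ring

lemma series_bound' (x : ℝ) (hx0 : 0 < x) (hx32 : x < 1/32) :
    -x < (∑' k : ℕ, ((∑ d ∈ (k + 1).divisors, d : ℕ) : ℝ) * (-x) ^ (k + 1)) ∧
    (∑' k : ℕ, ((∑ d ∈ (k + 1).divisors, d : ℕ) : ℝ) * (-x) ^ (k + 1)) < 0 := by
  set g : ℕ → ℝ := fun k => ((∑ d ∈ (k + 1).divisors, d : ℕ) : ℝ) * (-x) ^ (k + 1) with hg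
  have h2x : |2 * x| < 1 := by rw [abs_of_pos (by linarith)]; linarith
  -- pointwise bound
  have habs : ∀ k, |g k| ≤ 12 * x * (2 * x) ^ k := by
    intro k
    have h1 : |g k| = ((∑ d ∈ (k + 1).divisors, d : ℕ) : ℝ) * x ^ (k + 1) := by
      rw [hg, abs_mul, abs_pow, abs_neg, abs_of_pos hx0, Nat.abs_cast]
    have h2 : ((∑ d ∈ (k + 1).divisors, d : ℕ) : ℝ) ≤ 12 * 2 ^ k := by
      have := sigma1_le' (k + 1)
      have h3 : ((k + 1) * (k + 1) : ℕ) ≤ (k + 3) * (k + 3) := by nlinarith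
      have := pow_aux' k
      have h4 : ((∑ d ∈ (k + 1).divisors, d : ℕ)) ≤ 12 * 2 ^ k := by omega
      exact_mod_cast Nat.cast_le.2 h4
    rw [h1]
    calc ((∑ d ∈ (k + 1).divisors, d : ℕ) : ℝ) * x ^ (k + 1)
        ≤ (12 * 2 ^ k) * x ^ (k + 1) :=
          mul_le_mul_of_nonneg_right h2 (by positivity)
      _ = 12 * x * (2 * x) ^ k := by rw [mul_pow]; ring
  have hbsum : Summable (fun k : ℕ => 12 * x * (2 * x) ^ k) :=
    (summable_geometric_of_lt_one (by linarith) (by linarith)).mul_left _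
  have hsum : Summable g :=
    Summable.of_abs (hbsum.of_nonneg_of_le (fun k => abs_nonneg _) habs)
  -- split off two terms
  have hsum1 : Summable (fun n : ℕ => g (n + 1)) := (summable_nat_add_iff 1).2 hsum
  have hsum2 : Summable (fun n : ℕ => g (n + 2)) := (summable_nat_add_iff 2).2 hsum
  have hsplit : tsum g = g 0 + g 1 + ∑' n : ℕ, g (n + 2) := by
    rw [Summable.tsum_eq_zero_add hsum, Summable.tsum_eq_zero_add hsum1, add_assoc]
  have hg0 : g 0 = -x := by
    show ((∑ d ∈ (1 : ℕ).divisors, d : ℕ) : ℝ) * (-x) ^ 1 = -x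
    norm_num [Nat.divisors_one]
  have hg1 : g 1 = 3 * x ^ 2 := by
    show ((∑ d ∈ (2 : ℕ).divisors, d : ℕ) : ℝ) * (-x) ^ 2 = 3 * x ^ 2
    rw [Nat.Prime.divisors Nat.prime_two]
    norm_num
  -- bound the tail
  set R : ℝ := ∑' n : ℕ, g (n + 2) with hR
  have hRb : |R| ≤ 96 * x ^ 3 := by
    have heq : ∀ n : ℕ, 12 * x * (2 * x) ^ (n + 2) = 48 * x ^ 3 * (2 * x) ^ n := by
      intro n; ring
    have hb2 : Summable (fun n : ℕ => 48 * x ^ 3 * (2 * x) ^ n) :=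
      (summable_geometric_of_lt_one (by linarith) (by linarith)).mul_left _
    have hle : ∀ n : ℕ, |g (n + 2)| ≤ 48 * x ^ 3 * (2 * x) ^ n :=
      fun n => (habs (n + 2)).trans (le_of_eq (heq n))
    have habs2 : Summable (fun n : ℕ => |g (n + 2)|) :=
      hb2.of_nonneg_of_le (fun n => abs_nonneg _) hle
    have h1 : |R| ≤ ∑' n : ℕ, |g (n + 2)| := by
      simpa [Real.norm_eq_abs] using norm_tsum_le_tsum_norm (f := fun n => g (n + 2)) habs2
    have h2 : (∑' n : ℕ, |g (n + 2)|) ≤ ∑' n : ℕ, 48 * x ^ 3 * (2 * x) ^ n :=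
      Summable.tsum_le_tsum hle habs2 hb2
    have h3 : (∑' n : ℕ, 48 * x ^ 3 * (2 * x) ^ n) = 48 * x ^ 3 * (1 - 2 * x)⁻¹ := by
      rw [tsum_mul_left, tsum_geometric_of_lt_one (by linarith) (by linarith)]
    have h4 : (1 - 2 * x)⁻¹ ≤ 2 := by
      rw [inv_le_comm₀ (by linarith) (by norm_num)]
      linarith
    have h5 : 48 * x ^ 3 * (1 - 2 * x)⁻¹ ≤ 96 * x ^ 3 := by nlinarith [pow_pos hx0 3]
    linarith
  have hRb' := abs_le.mp hRb
  rw [hsplit, hg0, hg1]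
  constructor
  · nlinarith [pow_pos hx0 3, pow_pos hx0 2]
  · nlinarith [pow_pos hx0 3, pow_pos hx0 2]

/-- The value `η₁(1/2 + ib)`, given by the `q`-series
`η₁(τ) = π²/3 - 8π² ∑_{k≥1} σ₁(k) q^k` at `q = e^{2πiτ} = -e^{-2πb}`. -/
def eta1Line (b : ℝ) : ℝ :=
  π ^ 2 / 3 - 8 * π ^ 2 *
    ∑' k : ℕ, ((∑ d ∈ (k + 1).divisors, d : ℕ) : ℝ) * (-Real.exp (-2 * π * b)) ^ (k + 1)

/-- For `b ≥ √3/2`, one has `π²/3 < η₁(1/2 + ib) < π²/3 + 8π² e^{-2πb}`. -/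
theorem stmt_6 (b : ℝ) (hb : Real.sqrt 3 / 2 ≤ b) :
    π ^ 2 / 3 < eta1Line b ∧ eta1Line b < π ^ 2 / 3 + 8 * π ^ 2 * Real.exp (-2 * π * b) := by
  have hsqrt : (1.73 : ℝ) ≤ Real.sqrt 3 := by
    rw [show (1.73 : ℝ) = Real.sqrt (1.73 ^ 2) by rw [Real.sqrt_sq]; norm_num]
    exact Real.sqrt_le_sqrt (by norm_num)
  have hb' : (0.865 : ℝ) ≤ b := by linarith
  have hpi : (3.14 : ℝ) < π := by linarith [Real.pi_gt_d6]
  have harg : -2 * π * b ≤ -5 := by nlinarith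
  have hx32 : Real.exp (-2 * π * b) < 1 / 32 := by
    have h3 : (2.7 : ℝ) < Real.exp 1 := by linarith [Real.exp_one_gt_d9]
    have h4 : (2.7 : ℝ) ^ 5 ≤ Real.exp 1 ^ 5 := pow_le_pow_left₀ (by norm_num) h3.le 5
    have h5 : Real.exp 1 ^ 5 = Real.exp 5 := by
      rw [← Real.exp_nat_mul]; norm_num
    have h32 : (32 : ℝ) < Real.exp 5 := by norm_num at h4; linarith
    have h2 : Real.exp (-5) < 1 / 32 := by
      rw [Real.exp_neg]
      rw [inv_lt_comm₀ (Real.exp_pos 5) (by norm_num)]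
      norm_num; linarith
    calc Real.exp (-2 * π * b) ≤ Real.exp (-5) := Real.exp_le_exp.2 harg
      _ < 1 / 32 := h2
  obtain ⟨hlo, hhi⟩ := series_bound' (Real.exp (-2 * π * b)) (Real.exp_pos _) hx32
  have hπ2 : (0 : ℝ) < π ^ 2 := by positivity
  unfold eta1Line
  constructor
  · nlinarith
  · nlinarith
end
end

section
/- For b ≥ 6/5, η₁(1/2+ib) - √(g₂(1/2+ib)/12) < 78π² e^{-2πb}, and moreover 78π² e^{-2πb} < 2π/b for all b ≥ √3; consequently η₁(1/2+ib) - √(g₂(1/2+ib)/12) < 2π/b for b ≥ √3. -/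
noncomputable section
open Real

/-- The value `g₂(1/2 + ib)`, given by the `q`-series at `q = -e^{-2πb}`. -/
def g2Line (b : ℝ) : ℝ :=
  4 / 3 * π ^ 4 + 320 * π ^ 4 *
    ∑' k : ℕ, ((∑ d ∈ (k + 1).divisors, d ^ 3 : ℕ) : ℝ) * (-Real.exp (-2 * π * b)) ^ (k + 1)

/-! With `x = e^{-2πb}`, both `q`-series start `-x + O(x²)`: a geometric tail bound with
`σ_k(n+1) ≤ 2^{(k+1)n}` gives `η₁ ≤ π²/3 + 8π²(x + 5x²)` and `√(g₂/12) ≥ (π²/3)(1 - 150x)` once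
`x ≤ 1/1000`, which holds for `b ≥ 6/5`. The difference is then at most `π²(58x + 40x²) < 78π²x`.
The comparison with `2π/b` is `39πb < e^{2πb}`, which follows from `e^y ≥ y⁴/24`. -/

open ArithmeticFunction
open scoped ArithmeticFunction.sigma

theorem abs_tsum_mul_pow_sub_le {a : ℕ → ℝ} {C q : ℝ} (h1 : a 1 = 1)
    (ha : ∀ n, |a (n + 1)| ≤ C ^ n) (hCq : C * |q| < 1) :
    |∑' n, a (n + 1) * q ^ (n + 1) - q| ≤ C * q ^ 2 / (1 - C * |q|) := by
  have hC : 0 ≤ C := (abs_nonneg _).trans (by simpa using ha 1)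
  have hr : 0 ≤ C * |q| := by positivity
  have hterm (n : ℕ) : ‖a (n + 1) * q ^ (n + 1)‖ ≤ |q| * (C * |q|) ^ n := by
    rw [Real.norm_eq_abs, abs_mul, abs_pow]
    calc |a (n + 1)| * |q| ^ (n + 1) ≤ C ^ n * |q| ^ (n + 1) := by gcongr; exact ha n
      _ = |q| * (C * |q|) ^ n := by ring
  have hsum : Summable fun n => a (n + 1) * q ^ (n + 1) :=
    ((summable_geometric_of_lt_one hr hCq).mul_left |q|).of_norm_bounded hterm
  rw [hsum.tsum_eq_zero_add, h1, zero_add, pow_one, one_mul, add_sub_cancel_left, div_eq_mul_inv]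
  refine tsum_of_norm_bounded ((hasSum_geometric_of_lt_one hr hCq).mul_left (C * q ^ 2))
    fun n => (hterm (n + 1)).trans_eq ?_
  rw [← sq_abs q]
  ring

theorem sigma_succ_le (k n : ℕ) : σ k (n + 1) ≤ (2 ^ (k + 1)) ^ n :=
  calc σ k (n + 1) ≤ (n + 1) ^ (k + 1) := sigma_le_pow_succ k (n + 1)
    _ ≤ (2 ^ n) ^ (k + 1) := Nat.pow_le_pow_left Nat.lt_two_pow_self _
    _ = (2 ^ (k + 1)) ^ n := by rw [← pow_mul, ← pow_mul, mul_comm]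

theorem tsum_sigma_mul_neg_pow_ge (k : ℕ) {x : ℝ} (hx : 0 ≤ x) (hx1 : 2 ^ (k + 1) * x < 1) :
    -x - 2 ^ (k + 1) * x ^ 2 / (1 - 2 ^ (k + 1) * x) ≤
      ∑' n, (σ k (n + 1) : ℝ) * (-x) ^ (n + 1) := by
  have h1 : ((σ k 1 : ℕ) : ℝ) = 1 := by simp [sigma_apply]
  have hσ (n : ℕ) : |(σ k (n + 1) : ℝ)| ≤ (2 ^ (k + 1)) ^ n := by
    rw [Nat.abs_cast]
    exact_mod_cast sigma_succ_le k n
  have hq : |-x| = x := by rw [abs_neg, abs_of_nonneg hx]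
  have := abs_tsum_mul_pow_sub_le (a := fun n => (σ k n : ℝ)) h1 hσ (by rwa [hq])
  rw [hq, neg_sq] at this
  linarith [(abs_le.mp this).1]

theorem exp_neg_two_pi_mul_le {b : ℝ} (hb : 6 / 5 ≤ b) : exp (-2 * π * b) ≤ 1 / 1000 := by
  have he7 : 1000 ≤ exp 7 := by
    have : (2.7 : ℝ) ^ 7 ≤ exp 1 ^ 7 := by gcongr; linarith [exp_one_gt_d9]
    rw [← exp_nat_mul] at this
    norm_num at this
    linarith
  calc exp (-2 * π * b) ≤ exp (-7) := exp_le_exp.mpr (by nlinarith [pi_gt_d2])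
    _ ≤ 1 / 1000 := by rw [exp_neg, one_div]; exact inv_anti₀ (by norm_num) he7

theorem eta1Line_le {b : ℝ} (hb : exp (-2 * π * b) ≤ 1 / 20) :
    eta1Line b ≤ π ^ 2 / 3 + 8 * π ^ 2 * (exp (-2 * π * b) + 5 * exp (-2 * π * b) ^ 2) := by
  unfold eta1Line
  simp only [← sigma_one_apply]
  set x := exp (-2 * π * b)
  have hx : 0 < x := exp_pos _
  have hS := tsum_sigma_mul_neg_pow_ge 1 hx.le (by norm_num; linarith)
  norm_num only at hS
  have h4 : 4 * x ^ 2 / (1 - 4 * x) ≤ 5 * x ^ 2 := by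
    rw [div_le_iff₀ (by linarith)]; nlinarith
  nlinarith [pi_pos]

theorem sqrt_g2Line_div_twelve_ge {b : ℝ} (hb : exp (-2 * π * b) ≤ 1 / 1000) :
    π ^ 2 / 3 * (1 - 150 * exp (-2 * π * b)) ≤ √(g2Line b / 12) := by
  unfold g2Line
  simp only [← sigma_apply]
  set x := exp (-2 * π * b)
  have hx : 0 < x := exp_pos _
  have hS := tsum_sigma_mul_neg_pow_ge 3 hx.le (by norm_num; linarith)
  norm_num only at hS
  have h16 : 16 * x ^ 2 / (1 - 16 * x) ≤ 17 * x ^ 2 := by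
    rw [div_le_iff₀ (by linarith)]; nlinarith
  apply Real.le_sqrt_of_sq_le
  calc (π ^ 2 / 3 * (1 - 150 * x)) ^ 2 = π ^ 4 / 9 * (1 - 300 * x + 22500 * x ^ 2) := by ring
    _ ≤ π ^ 4 / 9 * (1 - 240 * x - 4080 * x ^ 2) := by gcongr; nlinarith
    _ ≤ _ := by nlinarith [pow_pos pi_pos 4]

theorem eta1Line_sub_sqrt_g2Line_lt {b : ℝ} (hb : 6 / 5 ≤ b) :
    eta1Line b - √(g2Line b / 12) < 78 * π ^ 2 * exp (-2 * π * b) := by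
  have hx := exp_neg_two_pi_mul_le hb
  have hη := eta1Line_le (hx.trans (by norm_num))
  have hg := sqrt_g2Line_div_twelve_ge hx
  set x := exp (-2 * π * b)
  have hx0 : 0 < x := exp_pos _
  calc eta1Line b - √(g2Line b / 12)
      ≤ π ^ 2 / 3 + 8 * π ^ 2 * (x + 5 * x ^ 2) - π ^ 2 / 3 * (1 - 150 * x) := by linarith
    _ = π ^ 2 * (58 * x + 40 * x ^ 2) := by ring
    _ < π ^ 2 * (78 * x) := by gcongr; nlinarith
    _ = 78 * π ^ 2 * x := by ring

theorem twenty_mul_lt_exp {y : ℝ} (hy : 8 ≤ y) : 20 * y < exp y :=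
  calc 20 * y < y ^ 4 / 24 := by nlinarith [pow_le_pow_left₀ (by norm_num) hy 3]
    _ ≤ exp y := by simpa [Nat.factorial] using pow_div_factorial_le_exp y (by linarith) 4

theorem mul_exp_neg_two_pi_mul_lt {b : ℝ} (hb : √3 ≤ b) :
    78 * π ^ 2 * exp (-2 * π * b) < 2 * π / b := by
  have hb17 : 1.7 ≤ b :=
    ((Real.le_sqrt (by norm_num) (by norm_num)).mpr (by norm_num)).trans hb
  have hb0 : 0 < b := by linarith
  have hexp := twenty_mul_lt_exp (y := 2 * π * b) (by nlinarith [pi_gt_d2])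
  rw [neg_mul, neg_mul, exp_neg, ← div_eq_mul_inv, div_lt_div_iff₀ (exp_pos _) hb0]
  nlinarith [mul_lt_mul_of_pos_left hexp two_pi_pos, pi_pos]

/-- For `b ≥ 6/5`, `η₁(1/2+ib) - √(g₂(1/2+ib)/12) < 78π² e^{-2πb}`; moreover
`78π² e^{-2πb} < 2π/b` for all `b ≥ √3`; consequently
`η₁(1/2+ib) - √(g₂(1/2+ib)/12) < 2π/b` for `b ≥ √3`. -/
theorem stmt_17 :
    (∀ b : ℝ, 6 / 5 ≤ b →
      eta1Line b - Real.sqrt (g2Line b / 12) < 78 * π ^ 2 * Real.exp (-2 * π * b)) ∧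
    (∀ b : ℝ, Real.sqrt 3 ≤ b → 78 * π ^ 2 * Real.exp (-2 * π * b) < 2 * π / b) ∧
    (∀ b : ℝ, Real.sqrt 3 ≤ b →
      eta1Line b - Real.sqrt (g2Line b / 12) < 2 * π / b) := by
  have h3 : (6 / 5 : ℝ) ≤ √3 := (Real.le_sqrt (by norm_num) (by norm_num)).mpr (by norm_num)
  exact ⟨fun _ hb => eta1Line_sub_sqrt_g2Line_lt hb, fun _ hb => mul_exp_neg_two_pi_mul_lt hb,
    fun _ hb => (eta1Line_sub_sqrt_g2Line_lt (h3.trans hb)).trans (mul_exp_neg_two_pi_mul_lt hb)⟩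
end
end
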